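/- Let f, g : ℕ → ℂ, N a positive integer, h a non-negative integer, and f' = f*μ, g' = g*μ. Then Σ_{n ≤ N} f(n) g(n+h) = Σ_{l | h} Σ_{d ≤ N/l} f'(ld) Σ_{q ≤ (N+h)/l, gcd(q,d)=1} g'(lq) · #{m ≤ N/(ld) : m ≡ d^{-1}·(−h/l) (mod q)}. -/

import Mathlib

open Finset ArithmeticFunction

/-! Möbius inversion writes `f(n) g(n+h)` as `∑_{D ∣ n, Q ∣ n+h} f'(D) g'(Q)`, so the left
side is `∑_{D,Q} f'(D) g'(Q) #{n ≤ N : D ∣ n, Q ∣ n + h}`. Such an `n` exists only if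
`l = gcd(D, Q)` divides `h`; then `D = l d`, `Q = l q` with `gcd(d, q) = 1`, and for
`n = l d m` the condition `Q ∣ n + h` reads `q ∣ d m + h / l`, i.e. `m ≡ d⁻¹ (-h / l) (mod q)`. -/

/-- `f' = f * μ`, the Dirichlet convolution of `f` with the Möbius function. -/
noncomputable def fprime (f : ℕ → ℂ) (d : ℕ) : ℂ :=
  ∑ e ∈ d.divisors, (moebius (d / e) : ℂ) * f e

theorem sum_divisors_fprime (f : ℕ → ℂ) {n : ℕ} (hn : 0 < n) :
    ∑ D ∈ n.divisors, fprime f D = f n := by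
  refine sum_eq_iff_sum_mul_moebius_eq.mpr (fun m _ => ?_) n hn
  rw [Nat.sum_divisorsAntidiagonal' (f := fun a b => (moebius a : ℂ) * f b)]
  rfl

theorem Nat.divisors_eq_filter_Icc {n M : ℕ} (hn : 0 < n) (hnM : n ≤ M) :
    n.divisors = {D ∈ Icc 1 M | D ∣ n} := by
  ext D
  simp only [Nat.mem_divisors, mem_filter, mem_Icc]
  exact ⟨fun ⟨hD, _⟩ =>
      ⟨⟨Nat.pos_of_dvd_of_pos hD hn, (Nat.le_of_dvd hn hD).trans hnM⟩, hD⟩,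
    fun ⟨_, hD⟩ => ⟨hD, hn.ne'⟩⟩

theorem sum_Icc_divisors_shift_eq_sum_card {M : Type*} [AddCommMonoid M] (G : ℕ → ℕ → M)
    (N h : ℕ) :
    ∑ n ∈ Icc 1 N, ∑ D ∈ n.divisors, ∑ Q ∈ (n + h).divisors, G D Q
      = ∑ D ∈ Icc 1 N, ∑ Q ∈ Icc 1 (N + h),
          #{n ∈ Icc 1 N | D ∣ n ∧ Q ∣ n + h} • G D Q := by
  have hexpand : ∀ n ∈ Icc 1 N, ∑ D ∈ n.divisors, ∑ Q ∈ (n + h).divisors, G D Q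
      = ∑ D ∈ Icc 1 N, ∑ Q ∈ Icc 1 (N + h),
          if D ∣ n ∧ Q ∣ n + h then G D Q else 0 := by
    intro n hn
    rw [mem_Icc] at hn
    rw [Nat.divisors_eq_filter_Icc (by omega) hn.2,
      Nat.divisors_eq_filter_Icc (M := N + h) (by omega) (by omega), sum_filter]
    refine sum_congr rfl fun D _ => ?_
    rw [sum_filter]
    split_ifs with hD <;> simp [hD]
  rw [sum_congr rfl hexpand, sum_comm]
  refine sum_congr rfl fun D _ => ?_
  rw [sum_comm]
  refine sum_congr rfl fun Q _ => ?_
  rw [← sum_filter, sum_const]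

theorem card_filter_Icc_dvd_and (P : ℕ → Prop) [DecidablePred P] {D : ℕ} (hD : 0 < D)
    (N : ℕ) :
    #{n ∈ Icc 1 N | D ∣ n ∧ P n} = #{m ∈ Icc 1 (N / D) | P (D * m)} := by
  refine card_nbij' (fun n => n / D) (fun m => D * m) ?_ ?_ ?_ ?_
  · rintro n hn
    simp only [coe_filter, mem_Icc, Set.mem_ofPred_eq] at hn ⊢
    obtain ⟨⟨hn1, hnN⟩, ⟨k, rfl⟩, hP⟩ := hn
    rw [Nat.mul_div_cancel_left k hD]
    refine ⟨⟨Nat.pos_of_mul_pos_left hn1, ?_⟩, hP⟩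
    rw [Nat.le_div_iff_mul_le hD, mul_comm]
    exact hnN
  · rintro m hm
    simp only [coe_filter, mem_Icc, Set.mem_ofPred_eq] at hm ⊢
    obtain ⟨⟨hm1, hmN⟩, hP⟩ := hm
    refine ⟨⟨Nat.mul_pos hD hm1, ?_⟩, dvd_mul_right D m, hP⟩
    rw [mul_comm]
    exact (Nat.le_div_iff_mul_le hD).mp hmN
  · rintro n hn
    simp only [coe_filter, Set.mem_ofPred_eq] at hn
    exact Nat.mul_div_cancel' hn.2.1
  · rintro m -
    exact Nat.mul_div_cancel_left m hD

theorem natCast_eq_inv_mul_neg_iff_dvd {q d m k : ℕ} (hco : Nat.Coprime q d) :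
    (m : ZMod q) = (d : ZMod q)⁻¹ * -(k : ZMod q) ↔ q ∣ d * m + k := by
  have hu : IsUnit (d : ZMod q) := (ZMod.isUnit_iff_coprime d q).mpr hco.symm
  rw [← ZMod.natCast_eq_zero_iff, Nat.cast_add, Nat.cast_mul, ← eq_neg_iff_add_eq_zero]
  constructor
  · intro hm
    rw [hm, ← mul_assoc, ZMod.mul_inv_of_unit _ hu, one_mul]
  · intro hm
    rw [← hm, ← mul_assoc, ZMod.inv_mul_of_unit _ hu, one_mul]

theorem card_dvd_and_shift_dvd_eq_card_congr {l d q h : ℕ} (hl : 0 < l) (hd : 0 < d)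
    (hlh : l ∣ h) (hco : Nat.Coprime q d) (N : ℕ) :
    #{n ∈ Icc 1 N | l * d ∣ n ∧ l * q ∣ n + h}
      = #{m ∈ Icc 1 (N / (l * d)) |
          ((m : ℕ) : ZMod q) = (d : ZMod q)⁻¹ * -((h / l : ℕ) : ZMod q)} := by
  rw [card_filter_Icc_dvd_and _ (Nat.mul_pos hl hd)]
  congr 1
  refine filter_congr fun m _ => ?_
  have hfactor : l * d * m + h = l * (d * m + h / l) := by
    rw [Nat.mul_add, Nat.mul_div_cancel' hlh, mul_assoc]
  rw [natCast_eq_inv_mul_neg_iff_dvd hco, hfactor, Nat.mul_dvd_mul_iff_left hl]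

theorem sum_filter_gcd_eq_sum_coprime {M : Type*} [AddCommMonoid M] (F : ℕ → ℕ → M)
    {l : ℕ} (hl : 0 < l) (A B : ℕ) :
    ∑ p ∈ Icc 1 A ×ˢ Icc 1 B with Nat.gcd p.1 p.2 = l, F p.1 p.2
      = ∑ p ∈ Icc 1 (A / l) ×ˢ Icc 1 (B / l) with Nat.Coprime p.2 p.1,
          F (l * p.1) (l * p.2) := by
  refine sum_nbij' (fun p => (p.1 / l, p.2 / l)) (fun p => (l * p.1, l * p.2)) ?_ ?_ ?_ ?_ ?_
  · rintro ⟨D, Q⟩ hp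
    simp only [mem_filter, mem_product, mem_Icc] at hp ⊢
    obtain ⟨⟨⟨hD1, hDA⟩, hQ1, hQB⟩, rfl⟩ := hp
    have hg := Nat.gcd_pos_of_pos_left Q hD1
    refine ⟨⟨⟨Nat.div_pos (Nat.gcd_le_left Q hD1) hg, Nat.div_le_div_right hDA⟩,
      Nat.div_pos (Nat.gcd_le_right D hQ1) hg, Nat.div_le_div_right hQB⟩, ?_⟩
    exact (Nat.coprime_div_gcd_div_gcd hg).symm
  · rintro ⟨d, q⟩ hp
    simp only [mem_filter, mem_product, mem_Icc] at hp ⊢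
    obtain ⟨⟨⟨hd1, hdA⟩, hq1, hqB⟩, hco⟩ := hp
    refine ⟨⟨⟨Nat.mul_pos hl hd1, ?_⟩, Nat.mul_pos hl hq1, ?_⟩, ?_⟩
    · rw [mul_comm]; exact (Nat.le_div_iff_mul_le hl).mp hdA
    · rw [mul_comm]; exact (Nat.le_div_iff_mul_le hl).mp hqB
    · rw [Nat.gcd_mul_left, Nat.Coprime.gcd_eq_one hco.symm, mul_one]
  · rintro ⟨D, Q⟩ hp
    simp only [mem_filter] at hp
    rw [← hp.2, Nat.mul_div_cancel' (Nat.gcd_dvd_left D Q),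
      Nat.mul_div_cancel' (Nat.gcd_dvd_right D Q)]
  · rintro ⟨d, q⟩ -
    simp only [Nat.mul_div_cancel_left _ hl]
  · rintro ⟨D, Q⟩ hp
    simp only [mem_filter] at hp
    rw [← hp.2, Nat.mul_div_cancel' (Nat.gcd_dvd_left D Q),
      Nat.mul_div_cancel' (Nat.gcd_dvd_right D Q)]

theorem sum_Icc_Icc_eq_sum_divisors_gcd {M : Type*} [AddCommMonoid M] (F : ℕ → ℕ → M)
    {h : ℕ} (hh : h ≠ 0) (hF : ∀ D Q, ¬ Nat.gcd D Q ∣ h → F D Q = 0) (A B : ℕ) :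
    ∑ D ∈ Icc 1 A, ∑ Q ∈ Icc 1 B, F D Q
      = ∑ l ∈ h.divisors, ∑ d ∈ Icc 1 (A / l),
          ∑ q ∈ Icc 1 (B / l) with Nat.Coprime q d, F (l * d) (l * q) := by
  have hfiber := sum_fiberwise_eq_sum_filter (Icc 1 A ×ˢ Icc 1 B) h.divisors
    (fun p => Nat.gcd p.1 p.2) (fun p => F p.1 p.2)
  rw [sum_filter_of_ne fun p _ hp => Nat.mem_divisors.mpr ⟨not_imp_comm.mp (hF _ _) hp, hh⟩,
    sum_product] at hfiber
  rw [← hfiber]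
  refine sum_congr rfl fun l hl => ?_
  rw [sum_filter_gcd_eq_sum_coprime F (Nat.pos_of_mem_divisors hl), sum_filter, sum_product]
  simp only [sum_filter]

theorem shifted_convolution_gathered_general (f g : ℕ → ℂ) (N h : ℕ)
    (hh : 0 < h) :
    ∑ n ∈ Finset.Icc 1 N, f n * g (n + h)
      = ∑ l ∈ h.divisors, ∑ d ∈ Finset.Icc 1 (N / l),
          ∑ q ∈ (Finset.Icc 1 ((N + h) / l)).filter (fun q => Nat.Coprime q d),
            fprime f (l * d) * fprime g (l * q) *
              (((Finset.Icc 1 (N / (l * d))).filter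
                  (fun m : ℕ => ((m : ℕ) : ZMod q) = ((d : ZMod q))⁻¹ * (-((h / l : ℕ) : ZMod q)))).card : ℂ) := by
  have hmobius : ∀ n ∈ Icc 1 N, f n * g (n + h)
      = ∑ D ∈ n.divisors, ∑ Q ∈ (n + h).divisors, fprime f D * fprime g Q := fun n hn => by
    rw [← sum_divisors_fprime f (mem_Icc.mp hn).1,
      ← sum_divisors_fprime g (by omega : 0 < n + h), sum_mul_sum]
  have hvanish : ∀ D Q, ¬ Nat.gcd D Q ∣ h →
      #{n ∈ Icc 1 N | D ∣ n ∧ Q ∣ n + h} • (fprime f D * fprime g Q) = 0 := by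
    intro D Q hDQ
    rw [card_eq_zero.mpr, zero_smul]
    refine filter_eq_empty_iff.mpr fun n _ ⟨hD, hQ⟩ => hDQ ?_
    exact (Nat.dvd_add_right ((Nat.gcd_dvd_left D Q).trans hD)).mp
      ((Nat.gcd_dvd_right D Q).trans hQ)
  rw [sum_congr rfl hmobius, sum_Icc_divisors_shift_eq_sum_card,
    sum_Icc_Icc_eq_sum_divisors_gcd _ hh.ne' hvanish]
  refine sum_congr rfl fun l hl => sum_congr rfl fun d hd => sum_congr rfl fun q hq => ?_
  rw [card_dvd_and_shift_dvd_eq_card_congr (Nat.pos_of_mem_divisors hl) (mem_Icc.mp hd).1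
    (Nat.dvd_of_mem_divisors hl) (mem_filter.mp hq).2, nsmul_eq_mul, mul_comm]

/-- Reorganizing the opened shifted convolution sum by `l = gcd(d, q)`:
`∑_{n ≤ N} f(n) g(n+h) = ∑_{l | h} ∑_{d ≤ N/l} f'(ld)
∑_{q ≤ (N+h)/l, (q,d)=1} g'(lq) ⋅ #{m ≤ N/(ld) : m ≡ d⁻¹(−h/l) (mod q)}`. -/
theorem shifted_convolution_gathered (f g : ℕ → ℂ) (N h : ℕ)
    (hN : 0 < N) (hh : 0 < h) :
    ∑ n ∈ Finset.Icc 1 N, f n * g (n + h)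
      = ∑ l ∈ h.divisors, ∑ d ∈ Finset.Icc 1 (N / l),
          ∑ q ∈ (Finset.Icc 1 ((N + h) / l)).filter (fun q => Nat.Coprime q d),
            fprime f (l * d) * fprime g (l * q) *
              (((Finset.Icc 1 (N / (l * d))).filter
                  (fun m : ℕ => ((m : ℕ) : ZMod q) = ((d : ZMod q))⁻¹ * (-((h / l : ℕ) : ZMod q)))).card : ℂ) :=
  shifted_convolution_gathered_general f g N h hh
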